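/- arXiv:2005.06145 — 2 statements merged into one kernel-verified Lean document; each statement's English description precedes it below -/
import Mathlib

section
/- Along any solution of the Cucker–Smale system on the half-line, the maximal velocity v_max(t) = max_i v_i(t) satisfies the differential inequality D⁺v_max(t) ≤ φ(D(t)) (p(t) − v_max(t)) + F_max(t) for every t ≥ 0, where D⁺ denotes the upper right Dini derivative. -/
open Filter MeasureTheory Real Set Topology

/-- Upper right Dini derivative. -/
noncomputable def diniUpper (f : ℝ → ℝ) (t : ℝ) : ℝ :=
  Filter.limsup (fun h : ℝ => (f (t + h) - f t) / h) (nhdsWithin 0 (Set.Ioi 0))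

theorem max_velocity_dini_inequality
    (N : ℕ) (hN : 1 ≤ N)
    (x v F : Fin N → ℝ → ℝ)
    (φ U U' : ℝ → ℝ) (ℓ : ℝ) (hℓ : 0 < ℓ)
    (hφpos : ∀ r : ℝ, 0 < φ r)
    (hφsmooth : ContDiff ℝ (⊤ : ℕ∞) φ)
    (hφeven : ∀ r : ℝ, φ (-r) = φ r)
    (hφanti : ∀ r s : ℝ, 0 ≤ r → r ≤ s → φ s ≤ φ r)
    (hUderiv : ∀ y ∈ Set.Ioi (0:ℝ), HasDerivAt U (U' y) y)
    (hU'cont : ContinuousOn U' (Set.Ioi 0))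
    (hUanti : ∀ y z : ℝ, 0 < y → y ≤ z → U z ≤ U y)
    (hUvanish : ∀ y : ℝ, ℓ ≤ y → U y = 0)
    (hUblow : Filter.Tendsto U (nhdsWithin 0 (Set.Ioi 0)) Filter.atTop)
    (hF : ∀ i t, F i t = -U' (x i t))
    (hxpos : ∀ i t, 0 ≤ t → 0 < x i t)
    (hx : ∀ i t, 0 ≤ t → HasDerivAt (x i) (v i t) t)
    (hv : ∀ i t, 0 ≤ t → HasDerivAt (v i)
      ((N : ℝ)⁻¹ * ∑ j, φ (x i t - x j t) * (v j t - v i t) + F i t) t) :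
    ∀ t : ℝ, 0 ≤ t →
      diniUpper (fun s => ⨆ i, v i s) t
        ≤ φ (⨆ i, ⨆ j, |x i t - x j t|) * ((N:ℝ)⁻¹ * ∑ i, v i t - ⨆ i, v i t)
          + ⨆ i, F i t := by
  intro t ht
  have hne : Nonempty (Fin N) := ⟨⟨0, hN⟩⟩
  have bdd : ∀ (f : Fin N → ℝ), BddAbove (Set.range f) :=
    fun f => (Set.finite_range f).bddAbove
  have hNpos : (0:ℝ) < (N:ℝ) := by exact_mod_cast hN
  set M := ⨆ i, v i t with hM
  set D := ⨆ i, ⨆ j, |x i t - x j t| with hD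
  set p := (N:ℝ)⁻¹ * ∑ i, v i t with hp
  set Fm := ⨆ i, F i t with hFm
  set B := φ D * (p - M) + Fm with hB
  set d : Fin N → ℝ :=
    fun j => (N : ℝ)⁻¹ * ∑ k, φ (x j t - x k t) * (v k t - v j t) + F j t with hd
  -- derivative bound at any argmax index
  have hdB : ∀ j, v j t = M → d j ≤ B := by
    intro j hj
    have hterm : ∀ k, φ (x j t - x k t) * (v k t - v j t) ≤ φ D * (v k t - v j t) := by
      intro k
      have hk : v k t - v j t ≤ 0 := by
        have h' : v k t ≤ M := le_ciSup (bdd fun k' => v k' t) k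
        rw [hj]; linarith
      have habs : φ (x j t - x k t) = φ |x j t - x k t| := by
        rcases le_or_gt 0 (x j t - x k t) with h | h
        · rw [abs_of_nonneg h]
        · rw [abs_of_neg h, hφeven]
      have hDk : |x j t - x k t| ≤ D := by
        refine le_trans (le_ciSup (bdd fun k' => |x j t - x k' t|) k) ?_
        exact le_ciSup (bdd fun i => ⨆ j', |x i t - x j' t|) j
      have hmono : φ D ≤ φ (x j t - x k t) := by
        rw [habs]; exact hφanti _ _ (abs_nonneg _) hDk
      exact mul_le_mul_of_nonpos_right hmono hk
    have hsum : ∑ k, φ (x j t - x k t) * (v k t - v j t)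
        ≤ φ D * ((∑ k, v k t) - (N:ℝ) * v j t) := by
      calc ∑ k, φ (x j t - x k t) * (v k t - v j t)
          ≤ ∑ k, φ D * (v k t - v j t) := Finset.sum_le_sum fun k _ => hterm k
        _ = φ D * ((∑ k, v k t) - (N:ℝ) * v j t) := by
            rw [← Finset.mul_sum, Finset.sum_sub_distrib, Finset.sum_const,
              Finset.card_univ, Fintype.card_fin, nsmul_eq_mul]
    have hFj : F j t ≤ Fm := le_ciSup (bdd fun i => F i t) j
    have h1 : (N : ℝ)⁻¹ * ∑ k, φ (x j t - x k t) * (v k t - v j t)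
        ≤ φ D * (p - M) := by
      have h2 : (N : ℝ)⁻¹ * ∑ k, φ (x j t - x k t) * (v k t - v j t)
          ≤ (N:ℝ)⁻¹ * (φ D * ((∑ k, v k t) - (N:ℝ) * v j t)) :=
        mul_le_mul_of_nonneg_left hsum (by positivity)
      have h3 : (N:ℝ)⁻¹ * (φ D * ((∑ k, v k t) - (N:ℝ) * v j t))
          = φ D * (p - M) := by
        rw [hp, ← hj]
        field_simp
      linarith
    rw [hd, hB]
    dsimp only
    linarith
  -- the index realizing the max at time t
  obtain ⟨i₀, hi₀⟩ := Finite.exists_max (fun k => v k t)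
  have hi₀M : v i₀ t = M := le_antisymm (le_ciSup (bdd fun k => v k t) i₀) (ciSup_le hi₀)
  -- slope convergence
  have hmap : Tendsto (fun h : ℝ => t + h) (𝓝[>] (0:ℝ)) (𝓝[≠] t) := by
    rw [tendsto_nhdsWithin_iff]
    constructor
    · have : Tendsto (fun h : ℝ => t + h) (𝓝 (0:ℝ)) (𝓝 (t + 0)) :=
        tendsto_const_nhds.add tendsto_id
      simpa using this.mono_left nhdsWithin_le_nhds
    · filter_upwards [self_mem_nhdsWithin] with h hh
      have hh' : (0:ℝ) < h := hh
      simp only [Set.mem_compl_iff, Set.mem_singleton_iff]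
      intro hcontra
      have : h = 0 := by linarith
      exact absurd this (ne_of_gt hh')
  have hq : ∀ j, Tendsto (fun h : ℝ => (v j (t + h) - v j t) / h)
      (𝓝[>] (0:ℝ)) (𝓝 (d j)) := by
    intro j
    have := (hasDerivAt_iff_tendsto_slope.mp (hv j t ht)).comp hmap
    refine this.congr fun h => ?_
    simp [Function.comp, slope_def_field, add_sub_cancel_left]
  -- the goal, via ε-approximation
  have main : ∀ ε : ℝ, 0 < ε → diniUpper (fun s => ⨆ i, v i s) t ≤ B + ε := by
    intro ε hε
    have hper : ∀ j, ∀ᶠ h in 𝓝[>] (0:ℝ), (v j (t + h) - M) / h ≤ B + ε := by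
      intro j
      rcases eq_or_lt_of_le (hi₀ j) with hjM | hjM
      · have hjM' : v j t = M := hjM.trans hi₀M
        have h1 : ∀ᶠ h in 𝓝[>] (0:ℝ), (v j (t + h) - v j t) / h < d j + ε :=
          (hq j).eventually_lt_const (by linarith)
        filter_upwards [h1] with h hh
        have h2 := hdB j hjM'
        rw [← hjM']
        exact (le_of_lt hh).trans (add_le_add_left h2 ε)
      · have hc : v j t - M < 0 := by rw [← hi₀M]; linarith
        have h2 : Tendsto (fun h : ℝ => (v j t - M) / h) (𝓝[>] (0:ℝ)) atBot := by
          have hinv : Tendsto (fun h : ℝ => h⁻¹) (𝓝[>] (0:ℝ)) atTop :=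
            tendsto_inv_nhdsGT_zero
          have := hinv.const_mul_atTop_of_neg hc
          simpa [div_eq_mul_inv] using this
        have h1 : ∀ᶠ h in 𝓝[>] (0:ℝ), (v j (t + h) - v j t) / h < d j + 1 :=
          (hq j).eventually_lt_const (lt_add_one _)
        have h3 : ∀ᶠ h in 𝓝[>] (0:ℝ), (v j t - M) / h ≤ B + ε - (d j + 1) :=
          h2.eventually (eventually_le_atBot _)
        filter_upwards [h1, h3] with h hh1 hh3
        have hsplit : (v j (t + h) - M) / h
            = (v j (t + h) - v j t) / h + (v j t - M) / h := by
          rw [← add_div]; ring_nf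
        rw [hsplit]; linarith
    have hEv : ∀ᶠ h in 𝓝[>] (0:ℝ),
        ((⨆ i, v i (t + h)) - M) / h ≤ B + ε := by
      filter_upwards [eventually_all.2 hper, self_mem_nhdsWithin] with h hall hh
      obtain ⟨j, hjmax⟩ := Finite.exists_max (fun k => v k (t + h))
      have hsup : (⨆ i, v i (t + h)) ≤ v j (t + h) := ciSup_le hjmax
      have hh' : (0:ℝ) < h := hh
      have : ((⨆ i, v i (t + h)) - M) / h ≤ (v j (t + h) - M) / h :=
        (div_le_div_iff_of_pos_right hh').mpr (by linarith)
      exact this.trans (hall j)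
    have hlb : ∀ᶠ h in 𝓝[>] (0:ℝ),
        d i₀ - 1 ≤ ((⨆ i, v i (t + h)) - M) / h := by
      have h1 : ∀ᶠ h in 𝓝[>] (0:ℝ), d i₀ - 1 < (v i₀ (t + h) - v i₀ t) / h :=
        (hq i₀).eventually_const_lt (by linarith)
      filter_upwards [h1, self_mem_nhdsWithin] with h hh1 hh
      have hle : v i₀ (t + h) ≤ ⨆ i, v i (t + h) := le_ciSup (bdd fun k => v k (t + h)) i₀
      have hh' : (0:ℝ) < h := hh
      have : (v i₀ (t + h) - v i₀ t) / h ≤ ((⨆ i, v i (t + h)) - M) / h :=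
        (div_le_div_iff_of_pos_right hh').mpr (by rw [hi₀M]; linarith)
      linarith
    have hcb : IsCoboundedUnder (· ≤ ·)  (𝓝[>] (0:ℝ))
        (fun h : ℝ => ((⨆ i, v i (t + h)) - M) / h) :=
      isCoboundedUnder_le_of_eventually_le _ hlb
    have : Filter.limsup (fun h : ℝ => ((⨆ i, v i (t + h)) - M) / h)
        (𝓝[>] (0:ℝ)) ≤ B + ε := Filter.limsup_le_of_le hcb hEv
    simpa [diniUpper, nhdsWithin] using this
  have : diniUpper (fun s => ⨆ i, v i s) t ≤ B :=
    le_of_forall_pos_le_add main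
  simpa [hB, hFm, hp, hD, hM] using this
end

section
/- Along any solution of the Cucker–Smale system on the half-line, the velocity amplitude A(t) = max_{i,j} |v_i(t) − v_j(t)| satisfies the differential inequality D⁺A(t) ≤ −φ(D(t)) A(t) + F_max(t) for every t ≥ 0, where D⁺ denotes the upper right Dini derivative. -/
open Filter MeasureTheory Real Set
open Topology

private lemma slope_tendsto_right {f : ℝ → ℝ} {d t : ℝ} (hf : HasDerivAt f d t) :
    Tendsto (fun h : ℝ => (f (t + h) - f t) / h) (𝓝[>] (0:ℝ)) (𝓝 d) := by
  have h1 : Tendsto (slope f t) (𝓝[≠] t) (𝓝 d) := hasDerivAt_iff_tendsto_slope.mp hf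
  have hmap : Tendsto (fun h : ℝ => t + h) (𝓝[>] (0:ℝ)) (𝓝[≠] t) := by
    rw [tendsto_nhdsWithin_iff]
    constructor
    · have : Tendsto (fun h : ℝ => t + h) (𝓝 (0:ℝ)) (𝓝 (t + 0)) :=
        (continuous_const.add continuous_id).tendsto 0
      simpa using this.mono_left nhdsWithin_le_nhds
    · filter_upwards [self_mem_nhdsWithin] with h hh
      simp only [Set.mem_compl_iff, Set.mem_singleton_iff]
      intro hc
      have : h = 0 := by linarith [hc]
      exact absurd this (ne_of_gt hh)
  have h2 := h1.comp hmap
  refine h2.congr fun h => ?_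
  simp [slope_def_field]

private lemma diniUpper_sup_le {ι : Type*} [Fintype ι] [Nonempty ι]
    (f : ι → ℝ → ℝ) (d : ι → ℝ) (t M : ℝ)
    (hf : ∀ k, HasDerivAt (f k) (d k) t)
    (hM : ∀ k, f k t = (⨆ k', f k' t) → d k ≤ M) :
    diniUpper (fun s => ⨆ k, f k s) t ≤ M := by
  set St : ℝ := ⨆ k', f k' t with hStdef
  have hbdd : ∀ s : ℝ, BddAbove (Set.range fun k => f k s) :=
    fun s => (Set.finite_range _).bddAbove
  obtain ⟨k0, hk0⟩ := Finite.exists_max (fun k => f k t)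
  have hslope : ∀ k, Tendsto (fun h : ℝ => (f k (t + h) - f k t) / h) (𝓝[>] (0:ℝ)) (𝓝 (d k)) :=
    fun k => slope_tendsto_right (hf k)
  have hk0t : f k0 t = St :=
    le_antisymm (le_ciSup (hbdd t) k0) (ciSup_le hk0)
  -- coboundedness
  have hge : ∀ᶠ h in 𝓝[>] (0:ℝ),
      d k0 - 1 ≤ ((⨆ k, f k (t + h)) - St) / h := by
    have h1 : ∀ᶠ h in 𝓝[>] (0:ℝ), d k0 - 1 ≤ (f k0 (t + h) - f k0 t) / h :=
      (hslope k0).eventually (eventually_ge_nhds (by linarith))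
    filter_upwards [h1, self_mem_nhdsWithin] with h hh hpos
    have hpos' : (0:ℝ) < h := hpos
    refine le_trans hh ?_
    have hnum : f k0 (t + h) - f k0 t ≤ (⨆ k, f k (t + h)) - St := by
      rw [← hk0t]
      have := le_ciSup (hbdd (t + h)) k0
      linarith
    gcongr
  have hcob : IsCoboundedUnder (· ≤ ·) (𝓝[>] (0:ℝ))
      (fun h : ℝ => ((⨆ k, f k (t + h)) - St) / h) :=
    IsBoundedUnder.isCoboundedUnder_le ⟨d k0 - 1, by
      rw [eventually_map]; exact hge⟩
  refine le_of_forall_pos_le_add fun ε hε => ?_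
  have hshow : diniUpper (fun s => ⨆ k, f k s) t
      = limsup (fun h : ℝ => ((⨆ k, f k (t + h)) - St) / h) (𝓝[>] (0:ℝ)) := rfl
  rw [hshow]
  refine Filter.limsup_le_of_le hcob ?_
  have hev : ∀ k, ∀ᶠ h in 𝓝[>] (0:ℝ), (f k (t + h) - St) / h ≤ M + ε := by
    intro k
    by_cases hk : f k t = St
    · have hdk : d k ≤ M := hM k hk
      have := (hslope k).eventually (eventually_le_nhds (show d k < M + ε by linarith))
      filter_upwards [this] with h hh
      rw [← hk]; exact hh
    · have hklt : f k t < St := lt_of_le_of_ne (le_ciSup (hbdd t) k) hk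
      have hbot : Tendsto (fun h : ℝ => (f k (t + h) - St) / h) (𝓝[>] (0:ℝ)) atBot := by
        have heq : (fun h : ℝ => (f k (t + h) - St) / h)
            = fun h : ℝ => (f k (t + h) - f k t) / h + (f k t - St) * h⁻¹ := by
          funext h; by_cases hh : h = 0 <;> field_simp <;> ring
        rw [heq]
        have h2 : Tendsto (fun h : ℝ => (f k t - St) * h⁻¹) (𝓝[>] (0:ℝ)) atBot :=
          (tendsto_const_mul_atBot_of_neg (by linarith)).mpr tendsto_inv_nhdsGT_zero
        have h1 : ∀ᶠ h in 𝓝[>] (0:ℝ), (f k (t + h) - f k t) / h ≤ d k + 1 :=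
          (hslope k).eventually (eventually_le_nhds (by linarith))
        exact tendsto_atBot_add_left_of_ge' (l := 𝓝[>] (0:ℝ)) (d k + 1) h1 h2
      exact hbot.eventually (eventually_le_atBot (M + ε))
  have hall : ∀ᶠ h in 𝓝[>] (0:ℝ), ∀ k, (f k (t + h) - St) / h ≤ M + ε :=
    eventually_all.mpr hev
  filter_upwards [hall, self_mem_nhdsWithin] with h hh hpos
  rw [div_le_iff₀ hpos, sub_le_iff_le_add]
  refine ciSup_le fun k => ?_
  have := hh k
  rw [div_le_iff₀ hpos] at this
  linarith

private lemma deriv_nonpos_of_antitone {U U' : ℝ → ℝ}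
    (hUderiv : ∀ y ∈ Set.Ioi (0:ℝ), HasDerivAt U (U' y) y)
    (hUanti : ∀ y z : ℝ, 0 < y → y ≤ z → U z ≤ U y)
    {y : ℝ} (hy : 0 < y) : U' y ≤ 0 := by
  have h1 : Tendsto (slope U y) (𝓝[>] y) (𝓝 (U' y)) :=
    (hasDerivAt_iff_tendsto_slope.mp (hUderiv y hy)).mono_left
      (nhdsWithin_mono _ fun z hz => ne_of_gt hz)
  refine le_of_tendsto h1 ?_
  filter_upwards [self_mem_nhdsWithin] with z hz
  have hU : U z ≤ U y := hUanti y z hy (le_of_lt hz)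
  have hzy : (0:ℝ) < z - y := sub_pos.mpr hz
  rw [slope_def_field]
  exact div_nonpos_iff.mpr (Or.inr ⟨by linarith, hzy.le⟩)

theorem amplitude_dini_inequality
    (N : ℕ) (hN : 1 ≤ N)
    (x v F : Fin N → ℝ → ℝ)
    (φ U U' : ℝ → ℝ) (ℓ : ℝ) (hℓ : 0 < ℓ)
    (hφpos : ∀ r : ℝ, 0 < φ r)
    (hφsmooth : ContDiff ℝ (⊤ : ℕ∞) φ)
    (hφeven : ∀ r : ℝ, φ (-r) = φ r)
    (hφanti : ∀ r s : ℝ, 0 ≤ r → r ≤ s → φ s ≤ φ r)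
    (hUderiv : ∀ y ∈ Set.Ioi (0:ℝ), HasDerivAt U (U' y) y)
    (hU'cont : ContinuousOn U' (Set.Ioi 0))
    (hUanti : ∀ y z : ℝ, 0 < y → y ≤ z → U z ≤ U y)
    (hUvanish : ∀ y : ℝ, ℓ ≤ y → U y = 0)
    (hUblow : Filter.Tendsto U (nhdsWithin 0 (Set.Ioi 0)) Filter.atTop)
    (hF : ∀ i t, F i t = -U' (x i t))
    (hxpos : ∀ i t, 0 ≤ t → 0 < x i t)
    (hx : ∀ i t, 0 ≤ t → HasDerivAt (x i) (v i t) t)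
    (hv : ∀ i t, 0 ≤ t → HasDerivAt (v i)
      ((N : ℝ)⁻¹ * ∑ j, φ (x i t - x j t) * (v j t - v i t) + F i t) t) :
    ∀ t : ℝ, 0 ≤ t →
      diniUpper (fun s => ⨆ i, ⨆ j, |v i s - v j s|) t
        ≤ -φ (⨆ i, ⨆ j, |x i t - x j t|) * (⨆ i, ⨆ j, |v i t - v j t|)
          + ⨆ i, F i t := by
  intro t ht
  haveI : Nonempty (Fin N) := Fin.pos_iff_nonempty.mp hN
  have hNpos : (0:ℝ) < (N:ℝ) := by exact_mod_cast hN
  set Dt : ℝ := ⨆ i, ⨆ j, |x i t - x j t| with hDtdef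
  set Fm : ℝ := ⨆ i, F i t with hFmdef
  -- pair setup
  set f : Fin N × Fin N → ℝ → ℝ := fun p s => v p.1 s - v p.2 s with hfdef
  have hbddv : ∀ s (i : Fin N), BddAbove (Set.range fun j => |v i s - v j s|) :=
    fun s i => (Set.finite_range _).bddAbove
  have hbddv2 : ∀ s : ℝ, BddAbove (Set.range fun i => ⨆ j, |v i s - v j s|) :=
    fun s => (Set.finite_range _).bddAbove
  have hbddf : ∀ s : ℝ, BddAbove (Set.range fun p : Fin N × Fin N => f p s) :=
    fun s => (Set.finite_range _).bddAbove
  have hAS : ∀ s : ℝ, (⨆ i, ⨆ j, |v i s - v j s|) = ⨆ p : Fin N × Fin N, f p s := by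
    intro s
    apply le_antisymm
    · refine ciSup_le fun i => ciSup_le fun j => ?_
      rw [abs_sub_le_iff]
      exact ⟨le_ciSup (hbddf s) (i, j), le_ciSup (hbddf s) (j, i)⟩
    · refine ciSup_le fun p => ?_
      calc f p s ≤ |v p.1 s - v p.2 s| := le_abs_self _
        _ ≤ ⨆ j, |v p.1 s - v j s| := le_ciSup (hbddv s p.1) p.2
        _ ≤ ⨆ i, ⨆ j, |v i s - v j s| := le_ciSup (hbddv2 s) p.1
  set At : ℝ := ⨆ i, ⨆ j, |v i t - v j t| with hAtdef
  have hgoaleq : diniUpper (fun s => ⨆ i, ⨆ j, |v i s - v j s|) t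
      = diniUpper (fun s => ⨆ p : Fin N × Fin N, f p s) t := by
    unfold diniUpper
    congr 1
    funext h
    simp only [hAS]
  rw [hgoaleq]
  set d : Fin N × Fin N → ℝ := fun p =>
    ((N : ℝ)⁻¹ * ∑ k, φ (x p.1 t - x k t) * (v k t - v p.1 t) + F p.1 t)
    - ((N : ℝ)⁻¹ * ∑ k, φ (x p.2 t - x k t) * (v k t - v p.2 t) + F p.2 t) with hddef
  have hd : ∀ p : Fin N × Fin N, HasDerivAt (f p) (d p) t :=
    fun p => (hv p.1 t ht).sub (hv p.2 t ht)
  refine diniUpper_sup_le f d t _ hd ?_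
  intro p hp
  obtain ⟨i, j⟩ := p
  have hsupft : (⨆ p' : Fin N × Fin N, f p' t) = At := (hAS t).symm
  rw [hsupft] at hp
  -- hp : f (i,j) t = At, i.e. v i t - v j t = At
  have hple : ∀ q : Fin N × Fin N, f q t ≤ At := fun q => by
    rw [← hsupft]; exact le_ciSup (hbddf t) q
  have hvle : ∀ k, v k t ≤ v i t := fun k => by
    have h1 := hple (k, j)
    simp only [hfdef] at h1 hp
    linarith
  have hvge : ∀ k, v j t ≤ v k t := fun k => by
    have h1 := hple (i, k)
    simp only [hfdef] at h1 hp
    linarith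
  have hbddx : ∀ a : Fin N, BddAbove (Set.range fun b => |x a t - x b t|) :=
    fun a => (Set.finite_range _).bddAbove
  have hbddx2 : BddAbove (Set.range fun a => ⨆ b, |x a t - x b t|) :=
    (Set.finite_range _).bddAbove
  have hDle : ∀ a b : Fin N, |x a t - x b t| ≤ Dt := fun a b =>
    le_trans (le_ciSup (hbddx a) b) (le_ciSup hbddx2 a)
  have hφD : ∀ a b : Fin N, φ Dt ≤ φ (x a t - x b t) := by
    intro a b
    have h1 : φ (x a t - x b t) = φ |x a t - x b t| := by
      rcases le_or_gt 0 (x a t - x b t) with hc | hc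
      · rw [abs_of_nonneg hc]
      · rw [abs_of_neg hc, hφeven]
    rw [h1]
    exact hφanti _ _ (abs_nonneg _) (hDle a b)
  have hS1 : ∑ k, φ (x i t - x k t) * (v k t - v i t) ≤ ∑ k, φ Dt * (v k t - v i t) :=
    Finset.sum_le_sum fun k _ =>
      mul_le_mul_of_nonpos_right (hφD i k) (by linarith [hvle k])
  have hS2 : ∑ k, φ Dt * (v k t - v j t) ≤ ∑ k, φ (x j t - x k t) * (v k t - v j t) :=
    Finset.sum_le_sum fun k _ =>
      mul_le_mul_of_nonneg_right (hφD j k) (by linarith [hvge k])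
  have hinv : (0:ℝ) ≤ (N:ℝ)⁻¹ := by positivity
  have hM1 := mul_le_mul_of_nonneg_left hS1 hinv
  have hM2 := mul_le_mul_of_nonneg_left hS2 hinv
  have hsum : (N:ℝ)⁻¹ * ∑ k, φ Dt * (v k t - v i t)
      - (N:ℝ)⁻¹ * ∑ k, φ Dt * (v k t - v j t) = φ Dt * (v j t - v i t) := by
    rw [← mul_sub, ← Finset.sum_sub_distrib]
    have heach : ∀ k : Fin N, φ Dt * (v k t - v i t) - φ Dt * (v k t - v j t)
        = φ Dt * (v j t - v i t) := fun k => by ring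
    rw [Finset.sum_congr rfl fun k _ => heach k, Finset.sum_const, Finset.card_univ,
      Fintype.card_fin, nsmul_eq_mul]
    field_simp
  have hvji : v j t - v i t = -At := by
    simp only [hfdef] at hp; linarith
  have hFi : F i t ≤ Fm := le_ciSup (f := fun i => F i t) ((Set.finite_range _).bddAbove) i
  have hFj : 0 ≤ F j t := by
    rw [hF]
    have := deriv_nonpos_of_antitone hUderiv hUanti (hxpos j t ht)
    linarith
  simp only [hddef]
  have : φ Dt * (v j t - v i t) = -φ Dt * At := by rw [hvji]; ring
  linarith [hM1, hM2, hsum]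
end
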